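/- Let M ≥ 2 and let K, β be positive integers with K ≤ M·β. With p = 1 - (1-1/M)^{K-1} and κ = 0.49, the quantity ξ₁ = min{ |(1-p)(1 - (1-1/M)^{-κ})| , |(1-p)(1 - (1-1/M)^{κ})| } satisfies ξ₁ ≥ 0.49 / (M · e^{(Mβ-1)/(M-1)}). -/

import Mathlib

/-!
Write `a = 1 - 1/M`, so that `1 - p = a ^ (K - 1)`. Bernoulli's inequality gives
`1 - a ^ κ ≥ κ (1 - a) = κ / M`, and `a ^ (-κ) - 1 ≥ 1 - a ^ κ` because `y⁻¹ + y ≥ 2`; hence both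
terms of the minimum are at least `a ^ (K - 1) · κ / M`. Finally `K - 1 ≤ Mβ - 1` and
`log a ≥ 1 - a⁻¹ = -1/(M - 1)` bound `a ^ (K - 1)` below by `exp (-(Mβ - 1)/(M - 1))`.
-/

open Real

lemma one_sub_le_abs_one_sub_inv {x : ℝ} (hx0 : 0 < x) (hx1 : x ≤ 1) :
    1 - x ≤ |1 - x⁻¹| := by
  have hinv : 1 ≤ x⁻¹ := one_le_inv_iff₀.mpr ⟨hx0, hx1⟩
  rw [abs_sub_comm, abs_of_nonneg (by linarith)]
  have : x⁻¹ * x = 1 := inv_mul_cancel₀ hx0.ne'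
  nlinarith [sq_nonneg (x - 1)]

lemma mul_one_sub_le_one_sub_rpow {a κ : ℝ} (ha : 0 ≤ a) (hκ0 : 0 ≤ κ) (hκ1 : κ ≤ 1) :
    κ * (1 - a) ≤ 1 - a ^ κ := by
  have h := rpow_one_add_le_one_add_mul_self (s := a - 1) (by linarith) hκ0 hκ1
  rw [add_sub_cancel] at h
  linarith

lemma mul_one_sub_le_min_abs_one_sub_rpow {a κ : ℝ} (ha0 : 0 < a) (ha1 : a ≤ 1) (hκ0 : 0 ≤ κ)
    (hκ1 : κ ≤ 1) : κ * (1 - a) ≤ min |1 - a ^ (-κ)| |1 - a ^ κ| := by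
  have hbern := mul_one_sub_le_one_sub_rpow ha0.le hκ0 hκ1
  have hpos : 0 < a ^ κ := rpow_pos_of_pos ha0 κ
  have hle : a ^ κ ≤ 1 := rpow_le_one ha0.le ha1 hκ0
  refine le_min ?_ (hbern.trans (le_abs_self _))
  rw [rpow_neg ha0.le]
  exact hbern.trans (one_sub_le_abs_one_sub_inv hpos hle)

lemma exp_neg_one_div_sub_one_le_one_sub_one_div {x : ℝ} (hx : 1 < x) :
    exp (-(1 / (x - 1))) ≤ 1 - 1 / x := by
  have hpos : 0 < 1 - 1 / x := sub_pos.mpr ((div_lt_one (by linarith)).mpr hx)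
  have hlog := one_sub_inv_le_log_of_pos hpos
  have hx1 : x - 1 ≠ 0 := by linarith
  have : 1 - (1 - 1 / x)⁻¹ = -(1 / (x - 1)) := by
    field_simp
    ring
  rw [this] at hlog
  exact (exp_le_exp.mpr hlog).trans_eq (exp_log hpos)

lemma exp_neg_div_sub_one_le_one_sub_one_div_pow {x : ℝ} (hx : 1 < x) (n : ℕ) :
    exp (-(n / (x - 1))) ≤ (1 - 1 / x) ^ n := by
  rw [show -(n / (x - 1)) = n * -(1 / (x - 1)) by ring, exp_nat_mul]
  gcongr
  exact exp_neg_one_div_sub_one_le_one_sub_one_div hx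

theorem xi_one_lower_bound_general
    (M K β : ℕ) (hM : 2 ≤ M) (hK : 1 ≤ K) (hKMβ : K ≤ M * β)
    (p κ ξ₁ : ℝ)
    (hp : p = 1 - (1 - 1 / (M : ℝ)) ^ (K - 1))
    (hκ : κ = 0.49)
    (hξ : ξ₁ = min |(1 - p) * (1 - (1 - 1 / (M : ℝ)) ^ (-κ))|
                  |(1 - p) * (1 - (1 - 1 / (M : ℝ)) ^ κ)|) :
    ξ₁ ≥ 0.49 / (M * Real.exp (((M : ℝ) * β - 1) / ((M : ℝ) - 1))) := by
  subst hκ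
  have hM1 : (1 : ℝ) < M := by exact_mod_cast hM
  set a : ℝ := 1 - 1 / (M : ℝ)
  have ha0 : 0 < a := sub_pos.mpr ((div_lt_one (by linarith)).mpr hM1)
  have ha1 : a ≤ 1 := sub_le_self _ (by positivity)
  have hpow_pos : 0 < a ^ (K - 1) := pow_pos ha0 _
  have hexp_le_pow : exp (-(((M : ℝ) * β - 1) / ((M : ℝ) - 1))) ≤ a ^ (K - 1) := by
    have hcast : ((M * β - 1 : ℕ) : ℝ) = (M : ℝ) * β - 1 := by
      push_cast [Nat.cast_sub (hK.trans hKMβ)]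
      ring
    calc exp (-(((M : ℝ) * β - 1) / ((M : ℝ) - 1)))
        ≤ a ^ (M * β - 1) := hcast ▸ exp_neg_div_sub_one_le_one_sub_one_div_pow hM1 _
      _ ≤ a ^ (K - 1) := pow_le_pow_of_le_one ha0.le ha1 (by omega)
  have hmin : 0.49 / (M : ℝ) ≤ min |1 - a ^ (-0.49 : ℝ)| |1 - a ^ (0.49 : ℝ)| := by
    have h := mul_one_sub_le_min_abs_one_sub_rpow ha0 ha1 (κ := 0.49) (by norm_num) (by norm_num)
    rwa [show 1 - a = 1 / (M : ℝ) from sub_sub_cancel _ _, mul_one_div] at h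
  calc ξ₁ = a ^ (K - 1) * min |1 - a ^ (-0.49 : ℝ)| |1 - a ^ (0.49 : ℝ)| := by
        rw [hξ, hp, sub_sub_cancel, abs_mul, abs_mul, abs_of_pos hpow_pos,
          mul_min_of_nonneg _ _ hpow_pos.le]
    _ ≥ exp (-(((M : ℝ) * β - 1) / ((M : ℝ) - 1))) * (0.49 / M) :=
        mul_le_mul hexp_le_pow hmin (by positivity) hpow_pos.le
    _ = 0.49 / (M * exp (((M : ℝ) * β - 1) / ((M : ℝ) - 1))) := by
        rw [exp_neg]
        field_simp

theorem xi_one_lower_bound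
    (M K β : ℕ) (hM : 2 ≤ M) (hK : 1 ≤ K) (hβ : 1 ≤ β) (hKMβ : K ≤ M * β)
    (p κ ξ₁ : ℝ)
    (hp : p = 1 - (1 - 1 / (M : ℝ)) ^ (K - 1))
    (hκ : κ = 0.49)
    (hξ : ξ₁ = min |(1 - p) * (1 - (1 - 1 / (M : ℝ)) ^ (-κ))|
                  |(1 - p) * (1 - (1 - 1 / (M : ℝ)) ^ κ)|) :
    ξ₁ ≥ 0.49 / (M * Real.exp (((M : ℝ) * β - 1) / ((M : ℝ) - 1))) :=
  xi_one_lower_bound_general M K β hM hK hKMβ p κ ξ₁ hp hκ hξ
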